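/- If σ is a cycle in the symmetric group on {1,…,n} (a permutation whose nontrivial orbits consist of a single orbit with at least two elements), then ℓ(σ) + 1 ≥ ord(σ), where ℓ(σ) is the number of inversions of σ and ord(σ) is the order of σ as a group element. Moreover, equality ℓ(σ) + 1 = ord(σ) holds if and only if σ is a product of pairwise distinct simple transpositions. -/

import Mathlib

/-- The number of inversions (the length) of a permutation of `{1,…,n}`. -/
def invCount {n : ℕ} (σ : Equiv.Perm (Fin n)) : ℕ :=
  (Finset.univ.filter fun p : Fin n × Fin n => p.1 < p.2 ∧ σ p.2 < σ p.1).card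

/-- The number of orbits of `{1,…,n}` under the cyclic group generated by `σ`. -/
noncomputable def orbitCount {n : ℕ} (σ : Equiv.Perm (Fin n)) : ℕ :=
  Nat.card (MulAction.orbitRel.Quotient (Subgroup.zpowers σ) (Fin n))

/-- A simple transposition: a swap of two consecutive integers `i` and `i+1`. -/
def IsSimpleTransposition {n : ℕ} (τ : Equiv.Perm (Fin n)) : Prop :=
  ∃ (i : ℕ) (h : i + 1 < n), τ = Equiv.swap ⟨i, Nat.lt_of_succ_lt h⟩ ⟨i + 1, h⟩

/-- `σ` is the product of a (possibly empty) list of pairwise distinct simple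
transpositions. -/
def IsProdOfDistinctSimpleTranspositions {n : ℕ} (σ : Equiv.Perm (Fin n)) : Prop :=
  ∃ l : List (Equiv.Perm (Fin n)),
    l.Nodup ∧ (∀ τ ∈ l, IsSimpleTransposition τ) ∧ σ = l.prod


/-! The order of a cycle is the size of its support. Call `c` a cut of `σ` when `σ` does not map
`{x ≤ c}` onto itself. As the stabilizer of `{x ≤ c}` is a subgroup, every cut of a product is a
cut of one of its factors; a simple transposition `sᵢ` has the single cut `i`; and every point of
the support of a cycle other than its maximum is a cut, since a power of the cycle carries it to
that maximum. Writing `σ` as a reduced word of `ℓ(σ)` simple transpositions therefore gives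
`|supp σ| ≤ #{distinct letters} + 1 ≤ ℓ(σ) + 1`, with equality only if the letters are distinct.
Conversely, in a product of distinct `sᵢ` all other factors preserve `{x ≤ i}`, which forces both
`i` and `i + 1` into the support; the lower endpoints of the factors together with the upper
endpoint of the largest one give `|supp σ| ≥ #factors + 1 ≥ ℓ(σ) + 1`. -/

open Equiv Finset MulAction Pointwise

namespace Equiv.Perm

section Cuts

variable {α : Type*} [LinearOrder α] [Fintype α]

open Classical in
/-- `c ∈ σ.cuts` when `σ` moves some point across the gap just above `c`. -/
noncomputable def cuts (σ : Perm α) : Finset α :=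
  {c | σ ∉ stabilizer (Perm α) (Set.Iic c)}

theorem mem_cuts {σ : Perm α} {c : α} :
    c ∈ σ.cuts ↔ σ ∉ stabilizer (Perm α) (Set.Iic c) := by
  simp [cuts]

theorem cuts_list_prod_subset (l : List (Perm α)) : l.prod.cuts ⊆ l.toFinset.biUnion cuts := by
  intro c hc
  by_contra h
  simp only [mem_biUnion, List.mem_toFinset, mem_cuts, not_exists, not_and, not_not] at h
  exact mem_cuts.1 hc (list_prod_mem h)

theorem cuts_swap_of_covBy {a b : α} (hab : a ⋖ b) : (swap a b).cuts = {a} := by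
  ext c
  simp only [mem_cuts, Equiv.swap_mem_stabilizer, Set.mem_Iic, mem_singleton]
  constructor
  · intro h
    by_contra hca
    exact h ⟨fun hac => hab.ge_of_gt (lt_of_le_of_ne hac (Ne.symm hca)), hab.le.trans⟩
  · rintro rfl
    simp [hab.lt]

theorem IsCycle.mem_cuts_of_lt {σ : Perm α} (hσ : σ.IsCycle) {x y : α} (hx : x ∈ σ.support)
    (hy : y ∈ σ.support) (hxy : x < y) : x ∈ σ.cuts := by
  rw [mem_cuts]
  intro hstab
  obtain ⟨k, rfl⟩ := hσ.sameCycle (mem_support.1 hx) (mem_support.1 hy)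
  have := mem_stabilizer_set.1 (zpow_mem hstab k) x
  exact hxy.not_ge (this.2 le_rfl)

theorem IsCycle.card_support_le_card_cuts_add_one {σ : Perm α} (hσ : σ.IsCycle) :
    #σ.support ≤ #σ.cuts + 1 := by
  have hb := σ.support.max'_mem hσ.nonempty_support
  have hsub : σ.support.erase (σ.support.max' hσ.nonempty_support) ⊆ σ.cuts := fun x hx =>
    hσ.mem_cuts_of_lt (mem_of_mem_erase hx) hb
      ((le_max' _ _ (mem_of_mem_erase hx)).lt_of_ne (ne_of_mem_erase hx))
  have := card_le_card hsub
  rw [card_erase_of_mem hb] at this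
  omega

end Cuts

theorem support_swap_union_subset_support_swap_mul {α : Type*} [DecidableEq α] [Fintype α]
    {s : Set α} {a b : α} {τ : Perm α} (hτ : τ ∈ stabilizer (Perm α) s) (ha : a ∈ s)
    (hb : b ∉ s) : (swap a b).support ∪ τ.support ⊆ (swap a b * τ).support := by
  have hτs : ∀ y, τ y ∈ s ↔ y ∈ s := mem_stabilizer_set.1 hτ
  intro x hx
  rw [mem_support, mul_apply, Ne, swap_apply_eq_iff]
  by_cases hxa : x = a
  · subst hxa
    rw [swap_apply_left]
    exact fun h => hb (h ▸ (hτs x).2 ha)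
  by_cases hxb : x = b
  · subst hxb
    rw [swap_apply_right]
    exact fun h => hb ((hτs x).1 (h ▸ ha))
  rw [swap_apply_of_ne_of_ne hxa hxb]
  rw [support_swap (ne_of_mem_of_not_mem ha hb), mem_union, mem_insert, mem_singleton,
    mem_support] at hx
  tauto

theorem exists_covBy_apply_lt_of_ne_one {α : Type*} [LinearOrder α] [LocallyFiniteOrder α]
    [Finite α] {σ : Perm α} (hσ : σ ≠ 1) : ∃ a b, a ⋖ b ∧ σ b < σ a := by
  by_contra! h
  have hmono : StrictMono σ := (strictMono_iff_forall_covBy σ).2 fun a b hab =>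
    (h a b hab).lt_of_ne (σ.injective.ne hab.ne)
  apply hσ
  ext x
  exact congrArg (· x) (Subsingleton.elim (hmono.orderIsoOfSurjective σ σ.surjective)
    (OrderIso.refl α))

end Equiv.Perm

theorem Equiv.swap_apply_lt_swap_apply_iff_of_covBy {α : Type*} [LinearOrder α] {a b u v : α}
    (hab : a ⋖ b) (h : ¬(u = a ∧ v = b)) (h' : ¬(u = b ∧ v = a)) :
    swap a b u < swap a b v ↔ u < v := by
  have hlt := hab.lt
  have hle : ∀ c, a < c → b ≤ c := fun c => hab.ge_of_gt
  have hle' : ∀ c, c < b → c ≤ a := fun c => hab.le_of_lt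
  rw [swap_apply_def, swap_apply_def]
  split_ifs <;> grind

section SimpleTranspositions

variable {n : ℕ}

theorem isSimpleTransposition_iff {τ : Perm (Fin n)} :
    IsSimpleTransposition τ ↔ ∃ a b : Fin n, a ⋖ b ∧ τ = swap a b := by
  constructor
  · rintro ⟨i, h, rfl⟩
    exact ⟨_, _, Fin.covBy_iff.2 (Nat.covBy_iff_add_one_eq.2 rfl), rfl⟩
  · rintro ⟨⟨a, ha⟩, ⟨b, hb⟩, hab, rfl⟩
    obtain rfl : a + 1 = b := Nat.covBy_iff_add_one_eq.1 (Fin.covBy_iff.1 hab)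
    exact ⟨a, hb, rfl⟩

namespace IsSimpleTransposition

variable {τ : Perm (Fin n)}

theorem card_cuts (hτ : IsSimpleTransposition τ) : #τ.cuts = 1 := by
  obtain ⟨a, b, hab, rfl⟩ := isSimpleTransposition_iff.1 hτ
  rw [Perm.cuts_swap_of_covBy hab, card_singleton]

theorem eq_swap_of_mem_cuts (hτ : IsSimpleTransposition τ) {a b : Fin n} (hab : a ⋖ b)
    (ha : a ∈ τ.cuts) : τ = swap a b := by
  obtain ⟨a', b', hab', rfl⟩ := isSimpleTransposition_iff.1 hτ
  rw [Perm.cuts_swap_of_covBy hab', mem_singleton] at ha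
  subst ha
  rw [hab.unique_right hab']

end IsSimpleTransposition

variable {l : List (Perm (Fin n))}

theorem card_cuts_list_prod_le (hl : ∀ τ ∈ l, IsSimpleTransposition τ) :
    #l.prod.cuts ≤ #l.toFinset :=
  calc #l.prod.cuts ≤ #(l.toFinset.biUnion Perm.cuts) :=
        card_le_card (Perm.cuts_list_prod_subset l)
    _ ≤ ∑ τ ∈ l.toFinset, #τ.cuts := card_biUnion_le
    _ = #l.toFinset := by
      rw [card_eq_sum_ones]
      exact sum_congr rfl fun τ hτ => (hl τ (List.mem_toFinset.1 hτ)).card_cuts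

theorem card_biUnion_cuts_of_nodup (hl : ∀ τ ∈ l, IsSimpleTransposition τ) (hnd : l.Nodup) :
    #(l.toFinset.biUnion Perm.cuts) = l.length := by
  rw [card_biUnion, ← List.toFinset_card_of_nodup hnd, card_eq_sum_ones]
  · exact sum_congr rfl fun τ hτ => (hl τ (List.mem_toFinset.1 hτ)).card_cuts
  · intro τ hτ τ' hτ' hττ'
    refine Finset.disjoint_left.2 fun c hc hc' => ?_
    obtain ⟨a, b, hab, rfl⟩ := isSimpleTransposition_iff.1 (hl τ (List.mem_toFinset.1 hτ))
    rw [Perm.cuts_swap_of_covBy hab, mem_singleton] at hc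
    subst hc
    exact hττ' ((hl τ' (List.mem_toFinset.1 hτ')).eq_swap_of_mem_cuts hab hc').symm

theorem support_subset_support_list_prod (hl : ∀ τ ∈ l, IsSimpleTransposition τ)
    (hnd : l.Nodup) : ∀ τ ∈ l, τ.support ⊆ l.prod.support := by
  induction l with
  | nil => simp
  | cons σ t ih =>
    obtain ⟨a, b, hab, rfl⟩ := isSimpleTransposition_iff.1 (hl σ List.mem_cons_self)
    rw [List.nodup_cons] at hnd
    have hstab : t.prod ∈ stabilizer (Perm (Fin n)) (Set.Iic a) := list_prod_mem fun τ hτ => by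
      by_contra h
      have := (hl τ (List.mem_cons_of_mem _ hτ)).eq_swap_of_mem_cuts hab (Perm.mem_cuts.2 h)
      exact hnd.1 (this ▸ hτ)
    have hsub := Perm.support_swap_union_subset_support_swap_mul hstab (Set.mem_Iic.2 le_rfl)
      (Set.notMem_Iic.2 hab.lt)
    rw [List.prod_cons]
    intro τ hτ
    rcases List.mem_cons.1 hτ with rfl | hτ
    · exact subset_union_left.trans hsub
    · exact (ih (fun τ' hτ' => hl τ' (List.mem_cons_of_mem _ hτ')) hnd.2 τ hτ).trans
        (subset_union_right.trans hsub)

theorem length_add_one_le_card_support (hl : ∀ τ ∈ l, IsSimpleTransposition τ) (hnd : l.Nodup)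
    (hne : l ≠ []) : l.length + 1 ≤ #l.prod.support := by
  set A := l.toFinset.biUnion Perm.cuts
  have hAne : A.Nonempty := by
    obtain ⟨τ, hτ⟩ := List.exists_mem_of_ne_nil l hne
    obtain ⟨a, b, hab, rfl⟩ := isSimpleTransposition_iff.1 (hl τ hτ)
    refine ⟨a, mem_biUnion.2 ⟨_, List.mem_toFinset.2 hτ, ?_⟩⟩
    simp [Perm.cuts_swap_of_covBy hab]
  have hsupp := support_subset_support_list_prod hl hnd
  obtain ⟨τ, hτ, hmax⟩ := mem_biUnion.1 (A.max'_mem hAne)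
  obtain ⟨a, b, hab, rfl⟩ := isSimpleTransposition_iff.1 (hl τ (List.mem_toFinset.1 hτ))
  rw [Perm.cuts_swap_of_covBy hab, mem_singleton] at hmax
  have hbA : b ∉ A := fun hb => (A.le_max' b hb).not_gt (hmax ▸ hab.lt)
  have hAsub : insert b A ⊆ l.prod.support := by
    intro x hx
    rcases mem_insert.1 hx with rfl | hx
    · exact hsupp _ (List.mem_toFinset.1 hτ) (by simp [Perm.support_swap hab.ne])
    obtain ⟨τ', hτ', hxτ'⟩ := mem_biUnion.1 hx
    have hτ' := List.mem_toFinset.1 hτ'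
    obtain ⟨a', b', hab', rfl⟩ := isSimpleTransposition_iff.1 (hl τ' hτ')
    rw [Perm.cuts_swap_of_covBy hab', mem_singleton] at hxτ'
    exact hsupp _ hτ' (by simp [Perm.support_swap hab'.ne, hxτ'])
  calc l.length + 1 = #(insert b A) := by
        rw [card_insert_of_notMem hbA, card_biUnion_cuts_of_nodup hl hnd]
    _ ≤ #l.prod.support := card_le_card hAsub

end SimpleTranspositions

section Inversions

variable {n : ℕ}

def inversions (σ : Perm (Fin n)) : Finset (Fin n × Fin n) :=
  {p | p.1 < p.2 ∧ σ p.2 < σ p.1}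

theorem invCount_eq_card_inversions (σ : Perm (Fin n)) : invCount σ = #(inversions σ) := rfl

theorem invCount_one : invCount (1 : Perm (Fin n)) = 0 := by
  rw [invCount_eq_card_inversions, card_eq_zero, inversions, filter_eq_empty_iff]
  exact fun p _ h => lt_asymm h.1 h.2

theorem inversions_swap_mul_of_covBy {a b : Fin n} (hab : a ⋖ b) {π : Perm (Fin n)}
    (h : π⁻¹ a < π⁻¹ b) :
    inversions (swap a b * π) = insert (π⁻¹ a, π⁻¹ b) (inversions π) := by
  ext ⟨u, v⟩
  simp only [inversions, mem_filter, mem_univ, true_and, mem_insert, Prod.mk.injEq]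
  rw [Perm.mul_apply, Perm.mul_apply]
  by_cases hba : u = π⁻¹ b ∧ v = π⁻¹ a
  · obtain ⟨rfl, rfl⟩ := hba
    exact iff_of_false (fun h' => h.not_gt h'.1) (by rintro (⟨h', -⟩ | ⟨h', -⟩) <;> grind)
  by_cases hab' : u = π⁻¹ a ∧ v = π⁻¹ b
  · obtain ⟨rfl, rfl⟩ := hab'
    exact iff_of_true ⟨h, by simpa using hab.lt⟩ (Or.inl ⟨rfl, rfl⟩)
  rw [swap_apply_lt_swap_apply_iff_of_covBy hab
    (by rwa [← Perm.eq_inv_iff_eq, ← Perm.eq_inv_iff_eq, and_comm])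
    (by rwa [← Perm.eq_inv_iff_eq, ← Perm.eq_inv_iff_eq, and_comm])]
  rw [or_iff_right hab']

theorem invCount_swap_mul_of_lt {a b : Fin n} (hab : a ⋖ b) {π : Perm (Fin n)}
    (h : π⁻¹ a < π⁻¹ b) : invCount (swap a b * π) = invCount π + 1 := by
  rw [invCount_eq_card_inversions, inversions_swap_mul_of_covBy hab h, card_insert_of_notMem]
  · rfl
  · simp [inversions, hab.lt.not_gt]

theorem invCount_eq_invCount_swap_mul_add_one {a b : Fin n} (hab : a ⋖ b) {π : Perm (Fin n)}
    (h : π⁻¹ b < π⁻¹ a) : invCount π = invCount (swap a b * π) + 1 := by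
  have h' : (swap a b * π)⁻¹ a < (swap a b * π)⁻¹ b := by simpa [mul_inv_rev] using h
  simpa [← mul_assoc] using invCount_swap_mul_of_lt hab h'

theorem invCount_swap_mul_le {a b : Fin n} (hab : a ⋖ b) (π : Perm (Fin n)) :
    invCount (swap a b * π) ≤ invCount π + 1 := by
  rcases lt_or_gt_of_ne (π⁻¹.injective.ne hab.ne) with h | h
  · exact (invCount_swap_mul_of_lt hab h).le
  · have := invCount_eq_invCount_swap_mul_add_one hab h
    omega

theorem invCount_list_prod_le {l : List (Perm (Fin n))}
    (hl : ∀ τ ∈ l, IsSimpleTransposition τ) : invCount l.prod ≤ l.length := by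
  induction l with
  | nil => simp [invCount_one]
  | cons τ t ih =>
    obtain ⟨a, b, hab, rfl⟩ := isSimpleTransposition_iff.1 (hl τ List.mem_cons_self)
    rw [List.prod_cons, List.length_cons]
    exact (invCount_swap_mul_le hab _).trans
      (Nat.add_le_add_right (ih fun τ hτ => hl τ (List.mem_cons_of_mem _ hτ)) 1)

theorem exists_list_prod_eq_length_eq_invCount (σ : Perm (Fin n)) :
    ∃ l : List (Perm (Fin n)),
      (∀ τ ∈ l, IsSimpleTransposition τ) ∧ l.prod = σ ∧ l.length = invCount σ := by
  rcases eq_or_ne σ 1 with rfl | hσ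
  · exact ⟨[], by simp, rfl, invCount_one.symm⟩
  obtain ⟨a, b, hab, hba⟩ := Perm.exists_covBy_apply_lt_of_ne_one (inv_ne_one.2 hσ)
  have hdec := invCount_eq_invCount_swap_mul_add_one hab hba
  obtain ⟨l, hl, hprod, hlen⟩ := exists_list_prod_eq_length_eq_invCount (swap a b * σ)
  refine ⟨swap a b :: l, ?_, ?_, ?_⟩
  · exact List.forall_mem_cons.2 ⟨isSimpleTransposition_iff.2 ⟨a, b, hab, rfl⟩, hl⟩
  · rw [List.prod_cons, hprod, ← mul_assoc, swap_mul_self, one_mul]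
  · rw [List.length_cons, hlen, hdec]
termination_by invCount σ
decreasing_by omega

end Inversions

/-- If σ is a cycle then ℓ(σ) + 1 ≥ ord(σ), with equality if and only if σ is a
product of pairwise distinct simple transpositions. -/
theorem cycle_length_add_one_ge_orderOf (n : ℕ) (σ : Equiv.Perm (Fin n))
    (hσ : σ.IsCycle) :
    orderOf σ ≤ invCount σ + 1 ∧
      (invCount σ + 1 = orderOf σ ↔ IsProdOfDistinctSimpleTranspositions σ) := by
  obtain ⟨l, hl, rfl, hlen⟩ := exists_list_prod_eq_length_eq_invCount σ
  have hupper : #l.prod.support ≤ #l.toFinset + 1 :=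
    hσ.card_support_le_card_cuts_add_one.trans (Nat.add_le_add_right (card_cuts_list_prod_le hl) 1)
  have hdedup : #l.toFinset ≤ l.length := l.toFinset_card_le
  rw [hσ.orderOf]
  refine ⟨by omega, fun h => ⟨l, ?_, hl, rfl⟩, ?_⟩
  · have : #l.toFinset = l.length := by omega
    exact Multiset.toFinset_card_eq_card_iff_nodup.1 this
  · rintro ⟨l', hnd, hl', hprod⟩
    have hne : l' ≠ [] := by
      rintro rfl
      exact hσ.ne_one hprod
    have hinv := invCount_list_prod_le hl'
    have hlower := length_add_one_le_card_support hl' hnd hne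
    rw [← hprod] at hinv hlower
    omega
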